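/- Let w be a word over {a,b} and x a letter such that wx is an open trapezoidal word while w is closed. Then L_w < H_w. -/
import Mathlib


/-- The two-letter alphabet {a, b}. -/
inductive AB : Type
  | a : AB
  | b : AB
deriving DecidableEq, Repr

/-- A (finite) word over {a, b}. -/
abbrev Word := List AB

open AB

/-- `u` occurs in `w` at position `i`. -/
def OccursAt (u w : Word) (i : ℕ) : Prop :=
  i + u.length ≤ w.length ∧ (w.drop i).take u.length = u

/-- `u` occurs exactly once in `w` (is unrepeated in `w`). -/
def OccursOnce (u w : Word) : Prop := ∃! i, OccursAt u w i

/-- `u` is a right special factor of `w`: both `ua` and `ub` are factors of `w`. -/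
def IsRightSpecial (u w : Word) : Prop := (u ++ [a]) <:+: w ∧ (u ++ [b]) <:+: w

/-- `u` is a left special factor of `w`: both `au` and `bu` are factors of `w`. -/
def IsLeftSpecial (u w : Word) : Prop := ([a] ++ u) <:+: w ∧ ([b] ++ u) <:+: w

/-- `K w`: the length of the shortest unrepeated suffix of `w`. -/
noncomputable def Kp (w : Word) : ℕ := sInf {n | ∃ s : Word, s <:+ w ∧ s.length = n ∧ OccursOnce s w}

/-- `H w`: the length of the shortest unrepeated prefix of `w`. -/
noncomputable def Hp (w : Word) : ℕ := sInf {n | ∃ p : Word, p <+: w ∧ p.length = n ∧ OccursOnce p w}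

/-- `R w`: the smallest `n ≥ 0` such that `w` has no right special factor of length `n`. -/
noncomputable def Rp (w : Word) : ℕ := sInf {n | ∀ u : Word, u.length = n → ¬ IsRightSpecial u w}

/-- `L w`: the smallest `n ≥ 0` such that `w` has no left special factor of length `n`. -/
noncomputable def Lp (w : Word) : ℕ := sInf {n | ∀ u : Word, u.length = n → ¬ IsLeftSpecial u w}

/-- A word `w` is trapezoidal if `|w| = K w + R w`. -/
def IsTrapezoidal (w : Word) : Prop := w.length = Kp w + Rp w

/-- A finite word over `{a,b}` is Sturmian iff it is balanced: there is no word `u`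
with both `aua` and `bub` factors of `w`. -/
def IsSturmian (w : Word) : Prop :=
  ¬ ∃ u : Word, ([a] ++ u ++ [a]) <:+: w ∧ ([b] ++ u ++ [b]) <:+: w

/-- A nonempty word is closed if it has a border (a proper prefix which is also a suffix)
whose only occurrences in `w` are as a prefix and as a suffix. -/
def IsClosedWord (w : Word) : Prop :=
  w ≠ [] ∧ ∃ v : Word, v <+: w ∧ v.length < w.length ∧ v <:+ w ∧
    ∀ i : ℕ, OccursAt v w i → i = 0 ∨ i + v.length = w.length

/-- A nonempty word is open if it is not closed. -/
def IsOpenWord (w : Word) : Prop := w ≠ [] ∧ ¬ IsClosedWord w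

/-- Central words: `a^n`, `b^n`, or `u a b v = v b a u`. -/
def IsCentral (w : Word) : Prop :=
  (∃ n : ℕ, w = List.replicate n a) ∨ (∃ n : ℕ, w = List.replicate n b) ∨
  (∃ u v : Word, w = u ++ [a, b] ++ v ∧ w = v ++ [b, a] ++ u)

/-- The minimal period of `w`: `|w|` minus the length of the longest border of `w`. -/
noncomputable def minPeriod (w : Word) : ℕ :=
  w.length - sSup {n | ∃ v : Word, v.length = n ∧ v <+: w ∧ v ≠ w ∧ v <:+ w}

namespace Aux

/-- Occurrence as a splitting. -/
lemma occursAt_iff {u w : Word} {i : ℕ} :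
    OccursAt u w i ↔ ∃ s t : Word, w = s ++ u ++ t ∧ s.length = i := by
  constructor
  · rintro ⟨hle, heq⟩
    refine ⟨w.take i, w.drop (i + u.length), ?_, by simp only [List.length_take]; omega⟩
    conv_lhs => rw [← List.take_append_drop i w]
    rw [List.append_assoc]
    congr 1
    conv_lhs => rw [← List.take_append_drop u.length (w.drop i)]
    rw [heq, List.drop_drop, Nat.add_comm]
  · rintro ⟨s, t, rfl, rfl⟩
    constructor
    · simp only [List.length_append]; omega
    · rw [List.append_assoc, List.drop_left, List.take_left]

lemma occursAt_infix {u w : Word} {i : ℕ} (h : OccursAt u w i) : u <:+: w := by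
  obtain ⟨s, t, rfl, -⟩ := occursAt_iff.1 h
  exact ⟨s, t, rfl⟩

lemma infix_occursAt {u w : Word} (h : u <:+: w) : ∃ i, OccursAt u w i := by
  obtain ⟨s, t, rfl⟩ := h
  exact ⟨s.length, occursAt_iff.2 ⟨s, t, rfl, rfl⟩⟩

lemma occursAt_prefix {u w : Word} (h : u <+: w) : OccursAt u w 0 := by
  obtain ⟨t, rfl⟩ := h
  exact occursAt_iff.2 ⟨[], t, by simp, rfl⟩

lemma prefix_of_occursAt_zero {u w : Word} (h : OccursAt u w 0) : u <+: w := by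
  obtain ⟨s, t, rfl, hs⟩ := occursAt_iff.1 h
  rw [List.length_eq_zero_iff] at hs
  subst hs
  exact ⟨t, by simp⟩

lemma occursAt_suffix {u w : Word} (h : u <:+ w) : OccursAt u w (w.length - u.length) := by
  obtain ⟨s, rfl⟩ := h
  exact occursAt_iff.2 ⟨s, [], by simp, by simp⟩

lemma suffix_of_occursAt_end {u w : Word} {i : ℕ} (h : OccursAt u w i)
    (he : i + u.length = w.length) : u <:+ w := by
  obtain ⟨s, t, rfl, hs⟩ := occursAt_iff.1 h
  have hlen : (s ++ u ++ t).length = s.length + u.length + t.length := by simp [Nat.add_assoc]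
  have : t.length = 0 := by omega
  rw [List.length_eq_zero_iff] at this
  subst this
  exact ⟨s, by simp⟩

lemma occursAt_append_elim {u v w : Word} {i : ℕ} (h : OccursAt (u ++ v) w i) :
    OccursAt u w i ∧ OccursAt v w (i + u.length) := by
  obtain ⟨s, t, hw, hs⟩ := occursAt_iff.1 h
  constructor
  · exact occursAt_iff.2 ⟨s, v ++ t, by rw [hw]; simp, hs⟩
  · exact occursAt_iff.2 ⟨s ++ u, t, by rw [hw]; simp, by simp [hs]⟩

lemma occursAt_extend_right {u w : Word} {i : ℕ} (h : OccursAt u w i)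
    (hlt : i + u.length < w.length) : ∃ y, OccursAt (u ++ [y]) w i := by
  obtain ⟨s, t, rfl, hs⟩ := occursAt_iff.1 h
  match t, hlt with
  | y :: t', _ =>
    exact ⟨y, occursAt_iff.2 ⟨s, t', by simp, hs⟩⟩
  | [], hlt => simp at hlt; omega

lemma occursAt_append_right {u w t : Word} {i : ℕ} (h : OccursAt u w i) :
    OccursAt u (w ++ t) i := by
  obtain ⟨s, t', rfl, hs⟩ := occursAt_iff.1 h
  exact occursAt_iff.2 ⟨s, t' ++ t, by simp, hs⟩

lemma occursAt_of_append_last {u w : Word} {x : AB} {i : ℕ}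
    (h : OccursAt u (w ++ [x]) i) (hle : i + u.length ≤ w.length) : OccursAt u w i := by
  obtain ⟨s, t, hw, hs⟩ := occursAt_iff.1 h
  have ht : t ≠ [] := by
    intro he
    subst he
    have := congrArg List.length hw
    simp at this hle
    omega
  obtain ⟨t', y, rfl⟩ : ∃ t' y, t = t' ++ [y] :=
    ⟨t.dropLast, t.getLast ht, (List.dropLast_append_getLast ht).symm⟩
  rw [show s ++ u ++ (t' ++ [y]) = (s ++ u ++ t') ++ [y] by simp] at hw
  have := List.append_inj' hw rfl
  exact occursAt_iff.2 ⟨s, t', this.1, hs⟩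

lemma length_le_of_occursAt {u w : Word} {i : ℕ} (h : OccursAt u w i) :
    i + u.length ≤ w.length := h.1

lemma exists_other_occurrence {u w : Word} {j : ℕ} (hj : OccursAt u w j)
    (h : ¬ OccursOnce u w) : ∃ i, OccursAt u w i ∧ i ≠ j := by
  by_contra hc
  push_neg at hc
  exact h ⟨j, hj, fun y hy => hc y hy⟩

lemma prefix_eq_of_length {u v w : Word} (h1 : u <+: w) (h2 : v <+: w)
    (h : u.length = v.length) : u = v := by
  rw [List.prefix_iff_eq_take] at h1 h2
  rw [h1, h2, h]

lemma suffix_eq_of_length {u v w : Word} (h1 : u <:+ w) (h2 : v <:+ w)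
    (h : u.length = v.length) : u = v := by
  rw [List.suffix_iff_eq_drop] at h1 h2
  rw [h1, h2, h]

lemma suffix_of_suffix_le {u v w : Word} (h1 : u <:+ w) (h2 : v <:+ w)
    (h : u.length ≤ v.length) : u <:+ v := by
  have hd : v.drop (v.length - u.length) <:+ w :=
    (List.drop_suffix _ _).trans h2
  have : u = v.drop (v.length - u.length) := by
    refine suffix_eq_of_length h1 hd ?_
    have hle : u.length ≤ v.length := h
    simp only [List.length_drop]
    omega
  rw [this]
  exact List.drop_suffix _ _

end Aux
namespace Aux

lemma occursAt_append_intro {u v w : Word} {i : ℕ} (h1 : OccursAt u w i)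
    (h2 : OccursAt v w (i + u.length)) : OccursAt (u ++ v) w i := by
  obtain ⟨s, t, hw, hs⟩ := occursAt_iff.1 h1
  obtain ⟨s', t', hw', hs'⟩ := occursAt_iff.1 h2
  have hpre : s' <+: w := ⟨v ++ t', by rw [hw', List.append_assoc]⟩
  have hpre2 : s ++ u <+: w := ⟨t, by rw [hw]⟩
  have hss : s' = s ++ u := prefix_eq_of_length hpre hpre2 (by simp [hs', hs])
  subst hss
  refine occursAt_iff.2 ⟨s, t', ?_, hs⟩
  rw [hw']; simp

lemma occursAt_singleton_inj {y z : AB} {w : Word} {i : ℕ}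
    (h1 : OccursAt [y] w i) (h2 : OccursAt [z] w i) : y = z := by
  have e1 := h1.2
  have e2 := h2.2
  simp only [List.length_singleton] at e1 e2
  rw [e1] at e2
  exact List.singleton_inj.1 e2

lemma occursOnce_self (w : Word) : OccursOnce w w := by
  refine ⟨0, occursAt_prefix (List.prefix_refl w), fun i hi => ?_⟩
  have := hi.1
  omega

lemma Hp_mem (w : Word) : ∃ p : Word, p <+: w ∧ p.length = Hp w ∧ OccursOnce p w := by
  have hne : {n | ∃ p : Word, p <+: w ∧ p.length = n ∧ OccursOnce p w}.Nonempty :=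
    ⟨w.length, w, List.prefix_refl w, rfl, occursOnce_self w⟩
  have := Nat.sInf_mem hne
  exact this

lemma Hp_le_length (w : Word) : Hp w ≤ w.length :=
  Nat.sInf_le ⟨w, List.prefix_refl w, rfl, occursOnce_self w⟩

lemma Hp_pos {w : Word} (hw : w ≠ []) : 1 ≤ Hp w := by
  by_contra hc
  push_neg at hc
  interval_cases h : Hp w
  · obtain ⟨p, hpre, hlen, honce⟩ := Hp_mem w
    rw [h] at hlen
    rw [List.length_eq_zero_iff] at hlen
    subst hlen
    have hw1 : 1 ≤ w.length := by
      cases w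
      · exact absurd rfl hw
      · simp
    have h0 : OccursAt [] w 0 := ⟨by simp, by simp⟩
    have h1 : OccursAt [] w 1 := ⟨by simp; omega, by simp⟩
    obtain ⟨i0, -, hu⟩ := honce
    have := hu 0 h0
    have := hu 1 h1
    omega

/-- The prefix of length `Hp w - 1` is repeated. -/
lemma prefix_repeated {w : Word} (hw : w ≠ []) :
    ¬ OccursOnce (w.take (Hp w - 1)) w := by
  intro honce
  have h1 := Hp_pos hw
  have hle := Hp_le_length w
  have : Hp w - 1 ∈ {n | ∃ p : Word, p <+: w ∧ p.length = n ∧ OccursOnce p w} :=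
    ⟨w.take (Hp w - 1), List.take_prefix _ _, by simp; omega, honce⟩
  have h2 : Hp w ≤ Hp w - 1 := Nat.sInf_le this
  omega

/-- Structure of closed words: the prefix of length `Hp w - 1` is a border whose only
occurrences are as a prefix and as a suffix. -/
lemma closed_structure {w : Word} (hclosed : IsClosedWord w) :
    (w.take (Hp w - 1)) <:+ w ∧
    (∀ i, OccursAt (w.take (Hp w - 1)) w i → i = 0 ∨ i + (Hp w - 1) = w.length) := by
  obtain ⟨hne, v, hvpre, hvlen, hvsuf, hvocc⟩ := hclosed
  have h1 := Hp_pos hne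
  have hle := Hp_le_length w
  set h := Hp w with hh
  set p := w.take (h - 1) with hp
  have hplen : p.length = h - 1 := by simp [hp]; omega
  have hppre : p <+: w := List.take_prefix _ _
  -- v is shorter than h
  have hvle : v.length ≤ h - 1 := by
    by_contra hc
    push_neg at hc
    obtain ⟨P, hPpre, hPlen, hPonce⟩ := Hp_mem w
    have hPv : P <+: v := List.prefix_of_prefix_length_le hPpre hvpre (by omega)
    obtain ⟨r, hr⟩ := hPv
    have hocc2 : OccursAt v w (w.length - v.length) := occursAt_suffix hvsuf
    rw [← hr] at hocc2
    have hoccP := (occursAt_append_elim hocc2).1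
    rw [hr] at hoccP
    have h0 : OccursAt P w 0 := occursAt_prefix hPpre
    obtain ⟨i0, -, hu⟩ := hPonce
    have e1 := hu _ hoccP
    have e2 := hu _ h0
    omega
  -- p has an occurrence i ≠ 0
  obtain ⟨i, hi, hine⟩ := exists_other_occurrence (occursAt_prefix hppre) (prefix_repeated hne)
  have hvp : v <+: p := List.prefix_of_prefix_length_le hvpre hppre (by omega)
  obtain ⟨r, hr⟩ := hvp
  have hiv : OccursAt v w i := by
    rw [← hr] at hi
    exact (occursAt_append_elim hi).1
  have hieq : i + v.length = w.length := by
    rcases hvocc i hiv with h0 | h0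
    · exact absurd h0 hine
    · exact h0
  have hple : i + p.length ≤ w.length := hi.1
  have : p.length = v.length := by omega
  have hpv : p = v := prefix_eq_of_length hppre hvpre this
  subst hpv
  refine ⟨hvsuf, fun j hj => ?_⟩
  rcases hvocc j hj with h0 | h0
  · exact Or.inl h0
  · right; omega

end Aux
namespace Aux

lemma ab_cases (y : AB) : y = AB.a ∨ y = AB.b := by cases y <;> simp

lemma eq_other {y c : AB} (h : y ≠ c) : ∀ z : AB, z = y ∨ z = c := by
  intro z
  cases y <;> cases c <;> cases z <;> simp_all

/-- Truncating a right special factor (from the left) keeps it right special. -/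
lemma rightSpecial_drop {u w : Word} (h : IsRightSpecial u w) (k : ℕ) :
    IsRightSpecial (u.drop k) w := by
  obtain ⟨ha, hb⟩ := h
  have key : ∀ y : AB, (u ++ [y]) <:+: w → (u.drop k ++ [y]) <:+: w := by
    intro y hy
    refine List.IsInfix.trans ?_ hy
    exact ⟨u.take k, [], by rw [List.append_nil, ← List.append_assoc, List.take_append_drop]⟩
  exact ⟨key _ ha, key _ hb⟩

/-- Left version. -/
lemma leftSpecial_take {u w : Word} (h : IsLeftSpecial u w) (k : ℕ) :
    IsLeftSpecial (u.take k) w := by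
  obtain ⟨ha, hb⟩ := h
  have key : ∀ y : AB, ([y] ++ u) <:+: w → ([y] ++ u.take k) <:+: w := by
    intro y hy
    refine List.IsInfix.trans ?_ hy
    exact ⟨[], u.drop k, by simp⟩
  exact ⟨key _ ha, key _ hb⟩

/-- `p` (the border of a closed word) is not right special in `w`. -/
lemma border_not_rightSpecial {w p : Word}
    (hocc : ∀ i, OccursAt p w i → i = 0 ∨ i + p.length = w.length) :
    ¬ IsRightSpecial p w := by
  rintro ⟨ha, hb⟩
  have key : ∀ y : AB, (p ++ [y]) <:+: w → OccursAt [y] w p.length := by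
    intro y hy
    obtain ⟨i, hi⟩ := infix_occursAt hy
    obtain ⟨hp, hyocc⟩ := occursAt_append_elim hi
    have hle := hi.1
    simp only [List.length_append, List.length_singleton] at hle
    rcases hocc i hp with h0 | h0
    · subst h0; simpa using hyocc
    · omega
  exact absurd (occursAt_singleton_inj (key _ ha) (key _ hb)) (by simp)

/-- The border `p` is not left special either. -/
lemma border_not_leftSpecial {w p : Word}
    (hocc : ∀ i, OccursAt p w i → i = 0 ∨ i + p.length = w.length) :
    ¬ IsLeftSpecial p w := by
  rintro ⟨ha, hb⟩
  have key : ∀ y : AB, ([y] ++ p) <:+: w → OccursAt [y] w (w.length - p.length - 1) := by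
    intro y hy
    obtain ⟨i, hi⟩ := infix_occursAt hy
    obtain ⟨hyocc, hp⟩ := occursAt_append_elim hi
    simp only [List.length_singleton] at hp
    rcases hocc _ hp with h0 | h0
    · omega
    · have : i = w.length - p.length - 1 := by omega
      rwa [this] at hyocc
  exact absurd (occursAt_singleton_inj (key _ ha) (key _ hb)) (by simp)

/-- The key sliding induction: a left special factor of length `≥ |p|` which is not
a suffix of `w` eventually yields a right special factor of length `|p|`. -/
lemma slide {w p : Word} (hpsuf : p <:+ w)
    (hocc : ∀ i, OccursAt p w i → i = 0 ∨ i + p.length = w.length) :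
    ∀ m n u, w.length ≤ n + m → p.length ≤ n → u.length = n → IsLeftSpecial u w →
      ¬ (u <:+ w) → ∃ v : Word, v.length = p.length ∧ IsRightSpecial v w := by
  intro m
  induction m with
  | zero =>
    intro n u hm hpn hlen ⟨ha, _⟩ _
    have := ha.length_le
    simp [hlen] at this
    omega
  | succ m ih =>
    intro n u hm hpn hlen hLS hnsuf
    obtain ⟨ha, hb⟩ := hLS
    obtain ⟨ia, hia⟩ := infix_occursAt ha
    obtain ⟨ib, hib⟩ := infix_occursAt hb
    obtain ⟨ha1, ha2⟩ := occursAt_append_elim hia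
    obtain ⟨hb1, hb2⟩ := occursAt_append_elim hib
    simp only [List.length_singleton] at ha2 hb2
    have hane : ia + 1 + n ≠ w.length := by
      intro he
      exact hnsuf (suffix_of_occursAt_end ha2 (by omega))
    have hbne : ib + 1 + n ≠ w.length := by
      intro he
      exact hnsuf (suffix_of_occursAt_end hb2 (by omega))
    have halt : ia + 1 + n < w.length := by have := ha2.1; omega
    have hblt : ib + 1 + n < w.length := by have := hb2.1; omega
    obtain ⟨da, hda⟩ := occursAt_extend_right ha2 (by omega)
    obtain ⟨db, hdb⟩ := occursAt_extend_right hb2 (by omega)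
    by_cases hd : da = db
    · -- slide: u ++ [da] is left special and not a suffix
      subst hd
      have hane' : ia ≠ ib := by
        intro he
        subst he
        exact absurd (occursAt_singleton_inj ha1 hb1) (by simp)
      have hLSa : ([AB.a] ++ (u ++ [da])) <:+: w := by
        apply occursAt_infix (i := ia)
        apply occursAt_append_intro ha1
        simpa using hda
      have hLSb : ([AB.b] ++ (u ++ [da])) <:+: w := by
        apply occursAt_infix (i := ib)
        apply occursAt_append_intro hb1
        simpa using hdb
      have hnsuf' : ¬ ((u ++ [da]) <:+ w) := by
        intro hsuf
        have hple : p.length ≤ (u ++ [da]).length := by simp [hlen]; omega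
        have hpsuf2 : p <:+ (u ++ [da]) := suffix_of_suffix_le hpsuf hsuf hple
        obtain ⟨z, hz⟩ := hpsuf2
        have hzlen : z.length + p.length = n + 1 := by
          have := congrArg List.length hz
          simp [hlen] at this
          omega
        have key : ∀ r, OccursAt (u ++ [da]) w r → r + (n + 1) = w.length := by
          intro r hr
          rw [← hz] at hr
          have hpocc := (occursAt_append_elim hr).2
          rcases hocc _ hpocc with h0 | h0
          · omega
          · omega
        have e1 := key _ hda
        have e2 := key _ hdb
        omega
      exact ih (n + 1) (u ++ [da]) (by omega) (by omega) (by simp [hlen]) ⟨hLSa, hLSb⟩ hnsuf'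
    · -- u is right special
      have hRS : IsRightSpecial u w := by
        rcases eq_other hd AB.a with h1 | h1 <;> rcases eq_other hd AB.b with h2 | h2
        · exact absurd (h1.trans h2.symm) (by simp)
        · exact ⟨by rw [h1]; exact occursAt_infix hda, by rw [h2]; exact occursAt_infix hdb⟩
        · exact ⟨by rw [h1]; exact occursAt_infix hdb, by rw [h2]; exact occursAt_infix hda⟩
        · exact absurd (h1.trans h2.symm) (by simp)
      refine ⟨u.drop (n - p.length), ?_, rightSpecial_drop hRS _⟩
      simp [hlen]
      omega

end Aux
namespace Aux

lemma occursAt_take {u w : Word} {i : ℕ} (k : ℕ) (h : OccursAt u w i) :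
    OccursAt (u.take k) w i := by
  obtain ⟨s, t, hw, hs⟩ := occursAt_iff.1 h
  refine occursAt_iff.2 ⟨s, u.drop k ++ t, ?_, hs⟩
  rw [hw, ← List.append_assoc (s ++ List.take k u) (List.drop k u) t,
    List.append_assoc s (List.take k u) (List.drop k u), List.take_append_drop]

/-- The finset of factors of `z` of length `n`. -/
def facs (z : Word) (n : ℕ) : Finset Word :=
  (Finset.range (z.length + 1 - n)).image (fun i => (z.drop i).take n)

lemma mem_facs {z v : Word} {n : ℕ} (hn : n ≤ z.length) :
    v ∈ facs z n ↔ v.length = n ∧ ∃ i, OccursAt v z i := by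
  simp only [facs, Finset.mem_image, Finset.mem_range]
  constructor
  · rintro ⟨i, hi, rfl⟩
    have hin : i + n ≤ z.length := by omega
    have hlen : ((z.drop i).take n).length = n := by
      simp only [List.length_take, List.length_drop]
      omega
    exact ⟨hlen, i, by rw [hlen]; omega, by rw [hlen]⟩
  · rintro ⟨hlen, i, hocc⟩
    have := hocc.1
    refine ⟨i, by omega, ?_⟩
    rw [← hlen]
    exact hocc.2

lemma card_facs_zero (z : Word) : (facs z 0).card = 1 := by
  have : facs z 0 = {[]} := by
    ext v
    simp only [facs, Finset.mem_image, Finset.mem_range, Finset.mem_singleton]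
    constructor
    · rintro ⟨i, hi, rfl⟩; simp
    · rintro rfl; exact ⟨0, by omega, by simp⟩
  rw [this, Finset.card_singleton]

lemma card_facs_full (z : Word) : (facs z z.length).card = 1 := by
  have : facs z z.length = {z} := by
    ext v
    simp only [facs, Finset.mem_image, Finset.mem_range, Finset.mem_singleton]
    constructor
    · rintro ⟨i, hi, rfl⟩
      have : i = 0 := by omega
      subst this
      simp [List.take_length]
    · rintro rfl; exact ⟨0, by omega, by simp [List.take_length]⟩
  rw [this, Finset.card_singleton]

instance decRS (z : Word) : DecidablePred fun v : Word => IsRightSpecial v z := fun v => by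
  unfold IsRightSpecial
  infer_instance

/-- Right special factors of length `n`, as a finset. -/
def rsf (z : Word) (n : ℕ) : Finset Word :=
  (facs z n).filter (fun v => IsRightSpecial v z)

lemma mem_facs_of_rs {z v : Word} {n : ℕ} (hn : n + 1 ≤ z.length)
    (hv : IsRightSpecial v z) (hvlen : v.length = n) : v ∈ facs z n := by
  obtain ⟨i, hi⟩ := infix_occursAt hv.1
  exact (mem_facs (by omega)).2 ⟨hvlen, i, (occursAt_append_elim hi).1⟩

lemma ext_mem_facs {z v : Word} {n : ℕ} (hn : n + 1 ≤ z.length)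
    (hv : IsRightSpecial v z) (hvlen : v.length = n) (y : AB) (hy : (v ++ [y]) <:+: z) :
    (v ++ [y]) ∈ facs z (n + 1) := by
  obtain ⟨i, hi⟩ := infix_occursAt hy
  exact (mem_facs hn).2 ⟨by simp [hvlen], i, hi⟩

/-- Key counting step. -/
lemma card_step {z : Word} {n : ℕ} (hn : n + 1 ≤ z.length) :
    (facs z n).card + (rsf z n).card ≤
      (facs z (n + 1)).card + (if Kp z ≤ n then 1 else 0) := by
  classical
  set D : Finset Word := (facs z (n + 1)).image List.dropLast with hD
  -- D ⊆ facs z n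
  have hD_sub : D ⊆ facs z n := by
    intro v hv
    simp only [hD, Finset.mem_image] at hv
    obtain ⟨u, hu, rfl⟩ := hv
    obtain ⟨hulen, i, hocc⟩ := (mem_facs hn).1 hu
    have hdl : u.dropLast = u.take n := by
      rw [List.dropLast_eq_take, hulen]
      simp
    rw [hdl]
    refine (mem_facs (by omega)).2 ⟨?_, i, occursAt_take n hocc⟩
    simp [hulen]
  -- rsf ⊆ D
  have hrs_sub : rsf z n ⊆ D := by
    intro v hv
    simp only [rsf, Finset.mem_filter] at hv
    obtain ⟨hvf, hvrs⟩ := hv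
    have hvlen : v.length = n := ((mem_facs (by omega)).1 hvf).1
    have hmem := ext_mem_facs hn hvrs hvlen AB.a hvrs.1
    simp only [hD, Finset.mem_image]
    exact ⟨v ++ [AB.a], hmem, by simp⟩
  -- every member of facs z n extends or is the unique unrepeated suffix
  have key_ext : ∀ v ∈ facs z n, (∃ y, (v ++ [y]) ∈ facs z (n + 1)) ∨
      (v <:+ z ∧ OccursOnce v z) := by
    intro v hv
    obtain ⟨hvlen, i, hocc⟩ := (mem_facs (by omega)).1 hv
    have hle := hocc.1
    have hext : ∀ j, OccursAt v z j → j + n < z.length → ∃ y, (v ++ [y]) ∈ facs z (n + 1) := by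
      intro j hj hjlt
      obtain ⟨y, hy⟩ := occursAt_extend_right hj (by omega)
      exact ⟨y, (mem_facs hn).2 ⟨by simp [hvlen], j, hy⟩⟩
    rcases Nat.lt_or_ge (i + n) z.length with hlt | hge
    · exact Or.inl (hext i hocc hlt)
    · have hieq : i + v.length = z.length := by omega
      have hsuf : v <:+ z := suffix_of_occursAt_end hocc hieq
      by_cases honce : OccursOnce v z
      · exact Or.inr ⟨hsuf, honce⟩
      · obtain ⟨j, hj, hjne⟩ := exists_other_occurrence hocc honce
        have := hj.1
        have : j + n < z.length := by
          rcases Nat.lt_or_ge (j + n) z.length with h' | h'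
          · exact h'
          · exfalso; apply hjne; omega
        exact Or.inl (hext j hj this)
    -- end key_ext
  -- card (facs z n) ≤ card D + δ
  set A : Finset Word := (facs z n).filter (fun v => ∃ y, (v ++ [y]) ∈ facs z (n + 1)) with hA
  have hA_sub : A ⊆ D := by
    intro v hv
    simp only [hA, Finset.mem_filter] at hv
    obtain ⟨-, y, hy⟩ := hv
    simp only [hD, Finset.mem_image]
    exact ⟨v ++ [y], hy, by simp⟩
  have hdiff : ((facs z n) \ A).card ≤ (if Kp z ≤ n then 1 else 0) := by
    by_cases hK : Kp z ≤ n
    · simp only [hK, if_true]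
      refine Finset.card_le_one.2 ?_
      intro v1 hv1 v2 hv2
      simp only [Finset.mem_sdiff, hA, Finset.mem_filter, not_and, not_exists] at hv1 hv2
      have h1 := key_ext v1 hv1.1
      have h2 := key_ext v2 hv2.1
      rcases h1 with ⟨y, hy⟩ | ⟨hs1, -⟩
      · exact absurd hy (hv1.2 hv1.1 y)
      rcases h2 with ⟨y, hy⟩ | ⟨hs2, -⟩
      · exact absurd hy (hv2.2 hv2.1 y)
      have l1 : v1.length = n := ((mem_facs (by omega)).1 hv1.1).1
      have l2 : v2.length = n := ((mem_facs (by omega)).1 hv2.1).1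
      exact suffix_eq_of_length hs1 hs2 (l1.trans l2.symm)
    · simp only [hK, if_false, Nat.le_zero, Finset.card_eq_zero]
      push_neg at hK
      rw [Finset.eq_empty_iff_forall_notMem]
      intro v hv
      simp only [Finset.mem_sdiff, hA, Finset.mem_filter, not_and, not_exists] at hv
      rcases key_ext v hv.1 with ⟨y, hy⟩ | ⟨hs, honce⟩
      · exact hv.2 hv.1 y hy
      · have hvlen : v.length = n := ((mem_facs (by omega)).1 hv.1).1
        have : n ∈ {m | ∃ s : Word, s <:+ z ∧ s.length = m ∧ OccursOnce s z} :=
          ⟨v, hs, hvlen, honce⟩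
        have := Nat.sInf_le this
        have : Kp z ≤ n := this
        omega
  have hcard1 : (facs z n).card ≤ D.card + (if Kp z ≤ n then 1 else 0) := by
    have := Finset.card_le_card hA_sub
    have h2 : (facs z n).card ≤ A.card + ((facs z n) \ A).card := by
      rw [← Finset.card_union_of_disjoint (Finset.disjoint_sdiff)]
      apply Finset.card_le_card
      intro v hv
      by_cases hvA : v ∈ A
      · exact Finset.mem_union_left _ hvA
      · exact Finset.mem_union_right _ (Finset.mem_sdiff.2 ⟨hv, hvA⟩)
    omega
  -- card D + card rsf ≤ card (facs z (n+1))
  have hcard2 : D.card + (rsf z n).card ≤ (facs z (n + 1)).card := by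
    have hsum : (facs z (n + 1)).card =
        ∑ v ∈ D, ((facs z (n + 1)).filter (fun u => u.dropLast = v)).card := by
      rw [hD]
      exact Finset.card_eq_sum_card_image List.dropLast (facs z (n + 1))
    have hlower : ∀ v ∈ D, 1 + (if IsRightSpecial v z then 1 else 0) ≤
        ((facs z (n + 1)).filter (fun u => u.dropLast = v)).card := by
      intro v hv
      have hvlen : v.length = n := ((mem_facs (by omega)).1 (hD_sub hv)).1
      by_cases hrs : IsRightSpecial v z
      · simp only [hrs, if_true]
        have hpa : (v ++ [AB.a]) ∈ (facs z (n + 1)).filter (fun u => u.dropLast = v) := by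
          rw [Finset.mem_filter]
          exact ⟨ext_mem_facs hn hrs hvlen AB.a hrs.1, by simp⟩
        have hpb : (v ++ [AB.b]) ∈ (facs z (n + 1)).filter (fun u => u.dropLast = v) := by
          rw [Finset.mem_filter]
          exact ⟨ext_mem_facs hn hrs hvlen AB.b hrs.2, by simp⟩
        have hne : (v ++ [AB.a]) ≠ (v ++ [AB.b]) := by
          intro he
          have := List.append_cancel_left he
          simp at this
        calc 1 + 1 = ({v ++ [AB.a], v ++ [AB.b]} : Finset Word).card := by
              rw [Finset.card_insert_of_notMem (by simp [hne]), Finset.card_singleton]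
          _ ≤ _ := Finset.card_le_card (by
              intro u hu
              simp only [Finset.mem_insert, Finset.mem_singleton] at hu
              rcases hu with rfl | rfl
              · exact hpa
              · exact hpb)
      · simp only [hrs, if_false]
        simp only [hD, Finset.mem_image] at hv
        obtain ⟨u, hu, rfl⟩ := hv
        have : u ∈ (facs z (n + 1)).filter (fun u' => u'.dropLast = u.dropLast) :=
          Finset.mem_filter.2 ⟨hu, rfl⟩
        have := Finset.card_pos.2 ⟨u, this⟩
        omega
    have hsum2 : ∑ v ∈ D, (1 + (if IsRightSpecial v z then 1 else 0)) ≤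
        ∑ v ∈ D, ((facs z (n + 1)).filter (fun u => u.dropLast = v)).card :=
      Finset.sum_le_sum hlower
    have hsplit : ∑ v ∈ D, (1 + (if IsRightSpecial v z then 1 else 0)) =
        D.card + (D.filter (fun v => IsRightSpecial v z)).card := by
      rw [Finset.sum_add_distrib]
      congr 1
      · simp
      · rw [Finset.card_filter]
    have hsub2 : rsf z n ⊆ D.filter (fun v => IsRightSpecial v z) := by
      intro v hv
      have h1 : v ∈ facs z n ∧ IsRightSpecial v z := Finset.mem_filter.1 hv
      exact Finset.mem_filter.2 ⟨hrs_sub hv, h1.2⟩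
    have hsub2c := Finset.card_le_card hsub2
    rw [hsplit] at hsum2
    omega
  omega

end Aux

namespace Aux
lemma mem_rsf {z v : Word} {n : ℕ} : v ∈ rsf z n ↔ v ∈ facs z n ∧ IsRightSpecial v z :=
  Finset.mem_filter
end Aux
namespace Aux

lemma Kp_le_length (z : Word) : Kp z ≤ z.length :=
  Nat.sInf_le ⟨z, List.suffix_refl z, rfl, occursOnce_self z⟩

lemma telescope (z : Word) : ∀ m, m ≤ z.length →
    1 + ∑ n ∈ Finset.range m, (rsf z n).card ≤
      (facs z m).card + ∑ n ∈ Finset.range m, (if Kp z ≤ n then 1 else 0) := by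
  intro m
  induction m with
  | zero =>
    intro _
    simp [card_facs_zero]
  | succ m ih =>
    intro hm
    rw [Finset.sum_range_succ, Finset.sum_range_succ]
    have h1 := ih (by omega)
    have h2 := card_step (z := z) (n := m) hm
    omega

lemma sum_delta (z : Word) :
    ∑ n ∈ Finset.range z.length, (if Kp z ≤ n then 1 else 0) = z.length - Kp z := by
  rw [← Finset.card_filter]
  have : (Finset.range z.length).filter (fun n => Kp z ≤ n) = Finset.Ico (Kp z) z.length := by
    ext n
    simp only [Finset.mem_filter, Finset.mem_range, Finset.mem_Ico]
    tauto
  rw [this, Nat.card_Ico]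

lemma sum_rsf_le (z : Word) :
    ∑ n ∈ Finset.range z.length, (rsf z n).card ≤ z.length - Kp z := by
  have h := telescope z z.length le_rfl
  rw [card_facs_full, sum_delta] at h
  omega

lemma Rset_nonempty (z : Word) :
    {n | ∀ u : Word, u.length = n → ¬ IsRightSpecial u z}.Nonempty := by
  refine ⟨z.length + 1, fun u hlen hrs => ?_⟩
  have := hrs.1.length_le
  simp only [List.length_append, List.length_singleton] at this
  omega

lemma rs_exists_of_lt_Rp {z : Word} {n : ℕ} (hn : n < Rp z) :
    ∃ v : Word, v.length = n ∧ IsRightSpecial v z := by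
  have hlt : n < sInf {n | ∀ u : Word, u.length = n → ¬ IsRightSpecial u z} := hn
  have := Nat.notMem_of_lt_sInf hlt
  simp only [Set.mem_setOf_eq, not_forall] at this
  obtain ⟨u, hu⟩ := this
  push_neg at hu
  exact ⟨u, hu.1, hu.2⟩

lemma lt_Rp_of_rs {z v : Word} (hv : IsRightSpecial v z) : v.length < Rp z := by
  by_contra hc
  push_neg at hc
  have hmem : ∀ u : Word, u.length = Rp z → ¬ IsRightSpecial u z :=
    Nat.sInf_mem (Rset_nonempty z)
  have htr := rightSpecial_drop hv (v.length - Rp z)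
  exact hmem (v.drop (v.length - Rp z)) (by simp; omega) htr

lemma open_ext {w p : Word} {x c : AB} (hpsuf : p <:+ w) (hplt : p.length < w.length)
    (hc : OccursAt (p ++ [c]) w 0)
    (hocc : ∀ i, OccursAt p w i → i = 0 ∨ i + p.length = w.length)
    (hopen : ¬ IsClosedWord (w ++ [x])) : x ≠ c := by
  rintro rfl
  apply hopen
  refine ⟨by simp, p ++ [x], ?_, by simp; omega, ?_, ?_⟩
  · exact (prefix_of_occursAt_zero hc).trans (List.prefix_append w [x])
  · obtain ⟨s, hs⟩ := hpsuf
    exact ⟨s, by rw [← List.append_assoc, hs]⟩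
  · intro i hi
    have hle := hi.1
    simp only [List.length_append, List.length_singleton] at hle
    by_cases hcase : i + p.length + 1 ≤ w.length
    · left
      have hw : OccursAt (p ++ [x]) w i :=
        occursAt_of_append_last hi (by simp; omega)
      have hp := (occursAt_append_elim hw).1
      rcases hocc i hp with h0 | h0
      · exact h0
      · exfalso
        have := hw.1
        simp only [List.length_append, List.length_singleton] at this
        omega
    · right
      simp only [List.length_append, List.length_singleton]
      omega

end Aux
open Aux in
/-- if `wx` is an open trapezoidal word while `w` is closed, then `L w < H w`. -/
theorem L_lt_H_at_end_of_closed_run (w : Word) (x : AB)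
    (htrap : IsTrapezoidal (w ++ [x])) (hopen : IsOpenWord (w ++ [x]))
    (hclosed : IsClosedWord w) :
    Lp w < Hp w := by
  by_contra hcon
  push_neg at hcon
  set z := w ++ [x] with hz
  have hwne : w ≠ [] := hclosed.1
  have hw1 : 1 ≤ w.length := List.length_pos_iff.2 hwne
  have hH1 : 1 ≤ Hp w := Hp_pos hwne
  have hHle : Hp w ≤ w.length := Hp_le_length w
  -- extract a left special factor u of length Hp w - 1
  have hlt : Hp w - 1 < Lp w := by omega
  have hlt' : Hp w - 1 < sInf {n | ∀ u : Word, u.length = n → ¬ IsLeftSpecial u w} := hlt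
  have hnotmem := Nat.notMem_of_lt_sInf hlt'
  simp only [Set.mem_setOf_eq, not_forall] at hnotmem
  obtain ⟨u, hu⟩ := hnotmem
  push_neg at hu
  obtain ⟨hulen, huLS⟩ := hu
  -- the border p
  set p := w.take (Hp w - 1) with hp
  have hplen : p.length = Hp w - 1 := by simp [hp]; omega
  have hppre : p <+: w := List.take_prefix _ _
  obtain ⟨hpsuf, hocc0⟩ := closed_structure hclosed
  rw [← hp] at hpsuf hocc0
  have hocc : ∀ i, OccursAt p w i → i = 0 ∨ i + p.length = w.length := by
    intro i hi
    rcases hocc0 i hi with h | h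
    · exact Or.inl h
    · right; omega
  have hplt : p.length < w.length := by omega
  -- the letter c following the prefix occurrence of p
  obtain ⟨c, hc⟩ := occursAt_extend_right (occursAt_prefix hppre) (by omega)
  -- x ≠ c since w ++ [x] is open
  have hxc : x ≠ c := open_ext hpsuf hplt hc hocc hopen.2
  -- u ≠ p and u is not a suffix of w
  have hup : u ≠ p := by
    rintro rfl
    exact border_not_leftSpecial hocc huLS
  have hnsuf : ¬ u <:+ w := fun hsuf => hup (suffix_eq_of_length hsuf hpsuf (by omega))
  -- the sliding induction yields a right special factor v of length |p| in w
  obtain ⟨v, hvlen, hvRS⟩ :=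
    slide hpsuf hocc w.length (Hp w - 1) u (by omega) (by omega) (by omega) huLS hnsuf
  have hvne : v ≠ p := by
    rintro rfl
    exact border_not_rightSpecial hocc hvRS
  -- move to z = w ++ [x]
  have hzlen : z.length = w.length + 1 := by simp [hz]
  have hwz : w <:+: z := ⟨[], [x], by simp [hz]⟩
  have hinfz : ∀ t : Word, t <:+: w → t <:+: z := fun t ht => ht.trans hwz
  have hpc : (p ++ [c]) <:+: z := hinfz _ (occursAt_infix hc)
  have hpx : (p ++ [x]) <:+: z := by
    obtain ⟨s, hs⟩ := hpsuf
    exact ⟨s, [], by rw [List.append_nil, ← List.append_assoc, hs]⟩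
  have hpRS : IsRightSpecial p z := by
    rcases eq_other hxc AB.a with h1 | h1 <;> rcases eq_other hxc AB.b with h2 | h2
    · exact absurd (h1.trans h2.symm) (by simp)
    · exact ⟨by rw [h1]; exact hpx, by rw [h2]; exact hpc⟩
    · exact ⟨by rw [h1]; exact hpc, by rw [h2]; exact hpx⟩
    · exact absurd (h1.trans h2.symm) (by simp)
  have hvRSz : IsRightSpecial v z := ⟨hinfz _ hvRS.1, hinfz _ hvRS.2⟩
  -- counting contradiction
  have hKR : z.length = Kp z + Rp z := htrap
  have hKle := Kp_le_length z
  have hn0R : p.length < Rp z := lt_Rp_of_rs hpRS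
  have hRle : Rp z ≤ z.length := by omega
  have hn1 : p.length + 1 ≤ z.length := by omega
  have hpmem : p ∈ rsf z p.length :=
    mem_rsf.2 ⟨mem_facs_of_rs hn1 hpRS rfl, hpRS⟩
  have hvmem : v ∈ rsf z p.length :=
    mem_rsf.2 ⟨mem_facs_of_rs hn1 hvRSz hvlen, hvRSz⟩
  have h2card : 2 ≤ (rsf z p.length).card := by
    have hsub : ({p, v} : Finset Word) ⊆ rsf z p.length := by
      intro t ht
      simp only [Finset.mem_insert, Finset.mem_singleton] at ht
      rcases ht with rfl | rfl
      · exact hpmem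
      · exact hvmem
    have hcard : ({p, v} : Finset Word).card = 2 := by
      rw [Finset.card_insert_of_notMem (by simp [Ne.symm hvne]), Finset.card_singleton]
    calc 2 = ({p, v} : Finset Word).card := hcard.symm
      _ ≤ _ := Finset.card_le_card hsub
  have hmem0 : p.length ∈ Finset.range (Rp z) := Finset.mem_range.2 hn0R
  have hone : ∀ n ∈ (Finset.range (Rp z)).erase p.length, 1 ≤ (rsf z n).card := by
    intro n hn
    have hnlt : n < Rp z := Finset.mem_range.1 (Finset.mem_erase.1 hn).2
    obtain ⟨v', hv'len, hv'RS⟩ := rs_exists_of_lt_Rp hnlt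
    exact Finset.card_pos.2
      ⟨v', mem_rsf.2 ⟨mem_facs_of_rs (by omega) hv'RS hv'len, hv'RS⟩⟩
  have hsum_lower : Rp z + 1 ≤ ∑ n ∈ Finset.range (Rp z), (rsf z n).card := by
    rw [← Finset.add_sum_erase _ _ hmem0]
    have hsm := Finset.card_nsmul_le_sum ((Finset.range (Rp z)).erase p.length)
      (fun n => (rsf z n).card) 1 hone
    simp only [smul_eq_mul, mul_one] at hsm
    have hcard_erase : ((Finset.range (Rp z)).erase p.length).card = Rp z - 1 := by
      rw [Finset.card_erase_of_mem hmem0, Finset.card_range]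
    omega
  have hmono : ∑ n ∈ Finset.range (Rp z), (rsf z n).card ≤
      ∑ n ∈ Finset.range z.length, (rsf z n).card :=
    Finset.sum_le_sum_of_subset (Finset.range_subset_range.2 hRle)
  have hsum_upper := sum_rsf_le z
  omega
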